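/- Let Ω ⊂ ℝ³ be a bounded measurable set and γ > 1. For any compact set K ⊂ (0,∞) there exists c₅ > 0 such that for every measurable ϱ : Ω → [0,∞) and r : Ω → K, ‖ϱ − r‖_{L^γ(Ω)}^γ ≤ c₅ (∫_Ω H(ϱ|r) dx)^{γ/2} + c₅ ∫_Ω H(ϱ|r) dx. -/

import Mathlib

/-!
Write `H(ϱ|r) = B(r, ϱ) / (γ - 1)`, where `B(s, t) = t^γ - s^γ - γ s^(γ-1) (t - s)` is the Bregman
divergence of `t ↦ t^γ` (`powBregman`), and let `w(h) = h²` for `|h| ≤ 1`, `w(h) = |h|^γ`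
otherwise (`entropyWeight`). Uniformly
for `s` in `[m, M] ⊂ (0, ∞)` and `t ≥ 0`, `B(s, t)` dominates a multiple of `w(t - s)`:
quadratically near the diagonal (split `B(s, t)` at the midpoint `u` of `s, t`; the cross term
`γ (u^(γ-1) - s^(γ-1)) (u - s)` is bounded below by the mean value theorem), by a constant away
from it (`B(s, ·)` is monotone on either side of `s`), and like `t^γ / 2` for large `t`.

Pointwise `|h|^γ ≤ w(h) + min(h², 1)^(γ/2)`. For `γ < 2`, Hölder's inequality on the set `Ω` of
finite measure gives `∫ min(d², 1)^(γ/2) ≤ |Ω|^(1-γ/2) (∫ w(d))^(γ/2)`; for `γ ≥ 2` already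
`|h|^γ ≤ w(h)`.
-/

open MeasureTheory Set Filter

lemma min_rpow_le_rpow {a b x : ℝ} (ha : 0 < a) (hx : x ∈ Icc a b) (p : ℝ) :
    min (a ^ p) (b ^ p) ≤ x ^ p := by
  rcases le_total 0 p with hp | hp
  · exact (min_le_left _ _).trans (Real.rpow_le_rpow ha.le hx.1 hp)
  · exact (min_le_right _ _).trans (Real.rpow_le_rpow_of_nonpos (ha.trans_le hx.1) hx.2 hp)

lemma mul_sub_le_rpow_sub_rpow {a b x y q : ℝ} (ha : 0 < a) (hq : 0 ≤ q) (hx : x ∈ Icc a b)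
    (hy : y ∈ Icc a b) (hyx : y ≤ x) :
    q * min (a ^ (q - 1)) (b ^ (q - 1)) * (x - y) ≤ x ^ q - y ^ q := by
  refine (convex_Icc a b).mul_sub_le_image_sub_of_le_deriv (f := fun z => z ^ q) ?_ ?_ ?_
    y hy x hx hyx
  · exact fun z hz =>
      (Real.continuousAt_rpow_const _ _ (Or.inl (ha.trans_le hz.1).ne')).continuousWithinAt
  · intro z hz
    rw [interior_Icc] at hz
    exact (Real.differentiableAt_rpow_const_of_ne _ (ha.trans hz.1).ne').differentiableWithinAt
  · intro z hz
    rw [interior_Icc] at hz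
    rw [Real.deriv_rpow_const]
    exact mul_le_mul_of_nonneg_left (min_rpow_le_rpow ha (Ioo_subset_Icc_self hz) _) hq

lemma mul_sq_le_rpow_sub_rpow_mul_sub {a b x y q : ℝ} (ha : 0 < a) (hq : 0 ≤ q)
    (hx : x ∈ Icc a b) (hy : y ∈ Icc a b) :
    q * min (a ^ (q - 1)) (b ^ (q - 1)) * (x - y) ^ 2 ≤ (x ^ q - y ^ q) * (x - y) := by
  rcases le_total y x with hyx | hxy
  · have := mul_sub_le_rpow_sub_rpow ha hq hx hy hyx
    nlinarith [sub_nonneg.2 hyx]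
  · have := mul_sub_le_rpow_sub_rpow ha hq hy hx hxy
    nlinarith [sub_nonneg.2 hxy]

noncomputable def powBregman (γ s t : ℝ) : ℝ := t ^ γ - s ^ γ - γ * s ^ (γ - 1) * (t - s)

section powBregman

variable {γ s t : ℝ}

lemma powBregman_nonneg (hγ : 1 ≤ γ) (hs : 0 < s) (ht : 0 ≤ t) : 0 ≤ powBregman γ s t := by
  have hb := one_add_mul_self_le_rpow_one_add
    (by linarith [div_nonneg ht hs.le] : (-1 : ℝ) ≤ t / s - 1) hγ
  rw [add_sub_cancel, Real.div_rpow ht hs.le, le_div_iff₀ (Real.rpow_pos_of_pos hs γ)] at hb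
  have : s ^ γ * (1 + γ * (t / s - 1)) = s ^ γ + γ * s ^ (γ - 1) * (t - s) := by
    rw [Real.rpow_sub_one hs.ne']; field_simp
  unfold powBregman
  linarith

lemma powBregman_eq_add_add (γ s u t : ℝ) :
    powBregman γ s t =
      powBregman γ s u + powBregman γ u t + γ * (u ^ (γ - 1) - s ^ (γ - 1)) * (t - u) := by
  unfold powBregman; ring

lemma powBregman_monotoneOn (hγ : 1 ≤ γ) (hs : 0 < s) : MonotoneOn (powBregman γ s) (Ici s) := by
  intro u hu t _ hut
  have hu0 : 0 < u := hs.trans_le hu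
  rw [powBregman_eq_add_add γ s u t]
  have hpow : s ^ (γ - 1) ≤ u ^ (γ - 1) := Real.rpow_le_rpow hs.le hu (by linarith)
  have := mul_nonneg (mul_nonneg (by linarith : (0 : ℝ) ≤ γ) (sub_nonneg.2 hpow)) (sub_nonneg.2 hut)
  linarith [powBregman_nonneg hγ hu0 (hu0.le.trans hut)]

lemma powBregman_antitoneOn (hγ : 1 ≤ γ) : AntitoneOn (powBregman γ s) (Icc 0 s) := by
  intro t ht u hu htu
  rcases hu.1.eq_or_lt with rfl | hu0
  · rw [le_antisymm htu ht.1]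
  rw [powBregman_eq_add_add γ s u t]
  have hpow : u ^ (γ - 1) ≤ s ^ (γ - 1) := Real.rpow_le_rpow hu0.le hu.2 (by linarith)
  have := mul_nonneg (mul_nonneg (by linarith : (0 : ℝ) ≤ γ) (sub_nonneg.2 hpow)) (sub_nonneg.2 htu)
  linarith [powBregman_nonneg hγ hu0 ht.1]

end powBregman

noncomputable def entropyWeight (γ h : ℝ) : ℝ := if |h| ≤ 1 then h ^ 2 else |h| ^ γ

section entropyWeight

variable {γ : ℝ}

lemma entropyWeight_nonneg (h : ℝ) : 0 ≤ entropyWeight γ h := by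
  unfold entropyWeight; split_ifs <;> positivity

@[fun_prop]
lemma measurable_entropyWeight : Measurable (entropyWeight γ) :=
  Measurable.ite (measurableSet_le measurable_norm measurable_const) (by fun_prop) (by fun_prop)

lemma rpow_abs_le_entropyWeight (hγ : 2 ≤ γ) (h : ℝ) : |h| ^ γ ≤ entropyWeight γ h := by
  unfold entropyWeight
  split_ifs with h1
  · calc |h| ^ γ ≤ |h| ^ (2 : ℝ) :=
          Real.rpow_le_rpow_of_exponent_ge' (abs_nonneg h) h1 zero_le_two hγ
      _ = h ^ 2 := by rw [Real.rpow_two, sq_abs]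
  · exact le_rfl

lemma min_sq_one_le_entropyWeight (hγ : 0 ≤ γ) (h : ℝ) : min (h ^ 2) 1 ≤ entropyWeight γ h := by
  unfold entropyWeight
  split_ifs with h1
  · exact min_le_left _ _
  · exact (min_le_right _ _).trans (Real.one_le_rpow (not_le.1 h1).le hγ)

lemma rpow_abs_le_entropyWeight_add (h : ℝ) :
    |h| ^ γ ≤ entropyWeight γ h + min (h ^ 2) 1 ^ (γ / 2) := by
  unfold entropyWeight
  split_ifs with h1
  · have : |h| ^ γ = min (h ^ 2) 1 ^ (γ / 2) := by
      rw [min_eq_left (by nlinarith [abs_nonneg h, sq_abs h]), ← sq_abs, ← Real.rpow_two,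
        ← Real.rpow_mul (abs_nonneg h)]
      ring_nf
    rw [this]
    exact le_add_of_nonneg_left (sq_nonneg h)
  · exact le_add_of_nonneg_right (by positivity)

lemma entropyWeight_le_rpow {h T : ℝ} (hγ : 0 ≤ γ) (hT : 1 ≤ T) (hh : |h| ≤ T) :
    entropyWeight γ h ≤ T ^ γ := by
  unfold entropyWeight
  split_ifs with h1
  · calc h ^ 2 ≤ 1 := by nlinarith [abs_nonneg h, sq_abs h]
      _ ≤ T ^ γ := Real.one_le_rpow hT hγ
  · exact Real.rpow_le_rpow (abs_nonneg h) hh hγ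

end entropyWeight

lemma mul_sq_le_powBregman {γ a b s t : ℝ} (hγ : 1 < γ) (ha : 0 < a) (hs : s ∈ Icc a b)
    (ht : t ∈ Icc a b) :
    γ * (γ - 1) * min (a ^ (γ - 2)) (b ^ (γ - 2)) / 4 * (t - s) ^ 2 ≤ powBregman γ s t := by
  have hu : (s + t) / 2 ∈ Icc a b := ⟨by linarith [hs.1, ht.1], by linarith [hs.2, ht.2]⟩
  have hmid := mul_sq_le_rpow_sub_rpow_mul_sub ha (by linarith : 0 ≤ γ - 1) hu hs
  rw [show γ - 1 - 1 = γ - 2 by ring] at hmid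
  have h₁ := powBregman_nonneg hγ.le (ha.trans_le hs.1) (ha.trans_le hu.1).le
  have h₂ := powBregman_nonneg hγ.le (ha.trans_le hu.1) (ha.trans_le ht.1).le
  rw [powBregman_eq_add_add γ s ((s + t) / 2) t]
  have : t - (s + t) / 2 = (s + t) / 2 - s := by ring
  rw [this]
  nlinarith

lemma le_powBregman_of_le_abs_sub {γ κ δ s t : ℝ} (hγ : 1 ≤ γ) (hδ : 0 < δ) (hδs : δ ≤ s)
    (hquad : ∀ t', |t' - s| ≤ δ → κ * (t' - s) ^ 2 ≤ powBregman γ s t') (ht : 0 ≤ t)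
    (hst : δ ≤ |t - s|) : κ * δ ^ 2 ≤ powBregman γ s t := by
  have hs : 0 < s := hδ.trans_le hδs
  rcases le_total s t with hst' | hts
  · rw [abs_of_nonneg (sub_nonneg.2 hst')] at hst
    calc κ * δ ^ 2 = κ * (s + δ - s) ^ 2 := by ring
      _ ≤ powBregman γ s (s + δ) := hquad _ (by simp [abs_of_pos hδ])
      _ ≤ powBregman γ s t :=
        powBregman_monotoneOn hγ hs (by simp [hδ.le]) (by simp [hst']) (by linarith)
  · rw [abs_of_nonpos (sub_nonpos.2 hts)] at hst
    calc κ * δ ^ 2 = κ * (s - δ - s) ^ 2 := by ring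
      _ ≤ powBregman γ s (s - δ) := hquad _ (by simp [abs_of_pos hδ])
      _ ≤ powBregman γ s t :=
        powBregman_antitoneOn hγ ⟨ht, hts⟩ ⟨by linarith, by linarith⟩ (by linarith)

lemma eventually_rpow_le_two_mul_powBregman {γ : ℝ} (hγ : 1 < γ) (M : ℝ) :
    ∀ᶠ t in atTop, ∀ s ∈ Ioc 0 M, t ^ γ ≤ 2 * powBregman γ s t := by
  filter_upwards [(tendsto_rpow_atTop (sub_pos.2 hγ)).eventually_ge_atTop
      (2 * (M ^ γ + γ * M ^ (γ - 1))), eventually_ge_atTop (max 1 M)] with t hA ht s hs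
  have ht1 : 1 ≤ t := (le_max_left _ _).trans ht
  have hst : s ≤ t := hs.2.trans ((le_max_right _ _).trans ht)
  have hsγ : s ^ γ ≤ M ^ γ := Real.rpow_le_rpow hs.1.le hs.2 (by linarith)
  have hsγ₁ : s ^ (γ - 1) ≤ M ^ (γ - 1) := Real.rpow_le_rpow hs.1.le hs.2 (by linarith)
  have htγ : t ^ γ = t ^ (γ - 1) * t := by
    rw [← Real.rpow_add_one (by linarith : t ≠ 0), sub_add_cancel]
  have hMγ : 0 ≤ M ^ γ := Real.rpow_nonneg (hs.1.le.trans hs.2) γ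
  have hlin : γ * s ^ (γ - 1) * (t - s) ≤ γ * M ^ (γ - 1) * t := by
    have hM : 0 ≤ M := hs.1.le.trans hs.2
    exact mul_le_mul (by gcongr) (by linarith [hs.1]) (by linarith) (by positivity)
  unfold powBregman
  nlinarith [mul_le_mul_of_nonneg_right hA (by linarith : (0 : ℝ) ≤ t)]

lemma exists_mul_sq_le_powBregman {γ m M : ℝ} (hγ : 1 < γ) (hm : 0 < m) (hmM : m ≤ M) :
    ∃ κ > 0, ∀ s ∈ Icc m M, ∀ t, |t - s| ≤ m / 2 → κ * (t - s) ^ 2 ≤ powBregman γ s t := by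
  have hb : 0 < M + m / 2 := by linarith
  have := sub_pos.2 hγ
  refine ⟨γ * (γ - 1) * min ((m / 2) ^ (γ - 2)) ((M + m / 2) ^ (γ - 2)) / 4, ?_,
    fun s hs t ht => ?_⟩
  · have := lt_min (Real.rpow_pos_of_pos (half_pos hm) (γ - 2)) (Real.rpow_pos_of_pos hb (γ - 2))
    positivity
  have := abs_le.1 ht
  exact mul_sq_le_powBregman hγ (half_pos hm) ⟨by linarith [hs.1], by linarith [hs.2]⟩
    ⟨by linarith [hs.1], by linarith [hs.2]⟩

theorem exists_mul_entropyWeight_le_powBregman {γ m : ℝ} (hγ : 1 < γ) (hm : 0 < m) (M : ℝ) :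
    ∃ c > 0, ∀ s ∈ Icc m M, ∀ t, 0 ≤ t → c * entropyWeight γ (t - s) ≤ powBregman γ s t := by
  rcases lt_or_ge M m with hMm | hmM
  · exact ⟨1, one_pos, fun s hs => (not_le.2 hMm (hs.1.trans hs.2)).elim⟩
  obtain ⟨κ, hκ, hquad⟩ := exists_mul_sq_le_powBregman hγ hm hmM
  set δ := min (m / 2) 1
  have hδ : 0 < δ := lt_min (half_pos hm) one_pos
  obtain ⟨T, hT⟩ := eventually_atTop.1 ((eventually_rpow_le_two_mul_powBregman hγ M).and
    (eventually_ge_atTop (max 1 (M + 1))))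
  have hT1 : 1 ≤ T := (le_max_left _ _).trans (hT T le_rfl).2
  have hTM : M + 1 ≤ T := (le_max_right _ _).trans (hT T le_rfl).2
  have hTγ : 0 < T ^ γ := Real.rpow_pos_of_pos (by linarith) γ
  refine ⟨min (κ * δ ^ 2 / T ^ γ) (1 / 2), by positivity, fun s hs t ht => ?_⟩
  rcases le_or_gt |t - s| δ with hnear | hfar
  · have hc : κ * δ ^ 2 / T ^ γ ≤ κ := by
      rw [div_le_iff₀ hTγ]
      have hδ2 : δ ^ 2 ≤ 1 := by nlinarith [min_le_right (m / 2) 1]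
      exact mul_le_mul_of_nonneg_left (hδ2.trans (Real.one_le_rpow hT1 (by linarith))) hκ.le
    rw [entropyWeight, if_pos (hnear.trans (min_le_right _ _))]
    exact (mul_le_mul_of_nonneg_right ((min_le_left _ _).trans hc) (sq_nonneg _)).trans
      (hquad s hs t (hnear.trans (min_le_left _ _)))
  rcases le_or_gt t T with htT | hTt
  · have hw : entropyWeight γ (t - s) ≤ T ^ γ := entropyWeight_le_rpow (by linarith) hT1
      (abs_sub_le_iff.2 ⟨by linarith [hs.1], by linarith [hs.2]⟩)
    calc min (κ * δ ^ 2 / T ^ γ) (1 / 2) * entropyWeight γ (t - s)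
        ≤ κ * δ ^ 2 / T ^ γ * T ^ γ :=
          mul_le_mul (min_le_left _ _) hw (entropyWeight_nonneg _) (by positivity)
      _ = κ * δ ^ 2 := div_mul_cancel₀ _ hTγ.ne'
      _ ≤ powBregman γ s t := le_powBregman_of_le_abs_sub hγ.le hδ
          (by linarith [hs.1, min_le_left (m / 2) 1])
          (fun t' ht' => hquad s hs t' (ht'.trans (min_le_left _ _))) ht hfar.le
  · have h1 : 1 < |t - s| := by rw [abs_of_pos (by linarith [hs.2])]; linarith [hs.2]
    rw [entropyWeight, if_neg (not_le.2 h1)]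
    calc min (κ * δ ^ 2 / T ^ γ) (1 / 2) * |t - s| ^ γ ≤ 1 / 2 * t ^ γ :=
          mul_le_mul (min_le_right _ _) (Real.rpow_le_rpow (abs_nonneg _)
            (abs_sub_le_iff.2 ⟨by linarith [hs.1], by linarith [hs.2]⟩) (by linarith))
            (by positivity) (by norm_num)
      _ ≤ powBregman γ s t := by
          linarith [(hT t hTt.le).1 s ⟨hm.trans_le hs.1, hs.2⟩]

lemma Real.rpow_add_le_mul_rpow_add_rpow {a b p : ℝ} (ha : 0 ≤ a) (hb : 0 ≤ b) (hp : 1 ≤ p) :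
    (a + b) ^ p ≤ 2 ^ (p - 1) * (a ^ p + b ^ p) := by
  lift a to NNReal using ha
  lift b to NNReal using hb
  exact_mod_cast NNReal.rpow_add_le_mul_rpow_add_rpow a b hp

lemma exists_powBregman_le {γ : ℝ} (hγ : 1 ≤ γ) (M : ℝ) :
    ∃ C, ∀ s ∈ Ioc 0 M, ∀ t, 0 ≤ t → powBregman γ s t ≤ C * (1 + |t - s| ^ γ) := by
  refine ⟨2 ^ (γ - 1) * M ^ γ + 2 ^ (γ - 1) + γ * M ^ (γ - 1), fun s hs t ht => ?_⟩
  have hM : 0 ≤ M := hs.1.le.trans hs.2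
  have hd : 0 ≤ |t - s| ^ γ := by positivity
  have ht' : t ^ γ ≤ 2 ^ (γ - 1) * (M ^ γ + |t - s| ^ γ) :=
    (Real.rpow_le_rpow ht (by linarith [le_abs_self (t - s), hs.2]) (by linarith)).trans
      (Real.rpow_add_le_mul_rpow_add_rpow hM (abs_nonneg _) hγ)
  have habs : |t - s| ≤ 1 + |t - s| ^ γ := by
    rcases le_total |t - s| 1 with h | h
    · linarith
    · linarith [Real.self_le_rpow_of_one_le h hγ]
  have hlin : -(γ * s ^ (γ - 1) * (t - s)) ≤ γ * M ^ (γ - 1) * (1 + |t - s| ^ γ) := by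
    have hsM : s ^ (γ - 1) ≤ M ^ (γ - 1) := Real.rpow_le_rpow hs.1.le hs.2 (by linarith)
    calc -(γ * s ^ (γ - 1) * (t - s)) ≤ γ * s ^ (γ - 1) * |t - s| := by
          rw [← mul_neg]
          exact mul_le_mul_of_nonneg_left (neg_le_abs (t - s))
            (mul_nonneg (by linarith) (Real.rpow_nonneg hs.1.le _))
      _ ≤ γ * M ^ (γ - 1) * (1 + |t - s| ^ γ) := by gcongr
  have : 0 ≤ s ^ γ := Real.rpow_nonneg hs.1.le γ
  have h2 : (0 : ℝ) ≤ 2 ^ (γ - 1) := by positivity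
  have : 0 ≤ 2 ^ (γ - 1) * M ^ γ * |t - s| ^ γ := by positivity
  unfold powBregman
  nlinarith

noncomputable def relEntropy (γ ϱ r : ℝ) : ℝ :=
  ϱ ^ γ / (γ - 1) - r ^ γ / (γ - 1) - (γ * r ^ (γ - 1) / (γ - 1)) * (ϱ - r)

lemma relEntropy_eq_powBregman_div (γ ϱ r : ℝ) : relEntropy γ ϱ r = powBregman γ r ϱ / (γ - 1) := by
  unfold relEntropy powBregman; ring

theorem exists_mul_entropyWeight_le_relEntropy {γ m : ℝ} (hγ : 1 < γ) (hm : 0 < m) (M : ℝ) :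
    ∃ c > 0, ∀ r ∈ Icc m M, ∀ ϱ, 0 ≤ ϱ → c * entropyWeight γ (ϱ - r) ≤ relEntropy γ ϱ r := by
  obtain ⟨c, hc, hlow⟩ := exists_mul_entropyWeight_le_powBregman hγ hm M
  refine ⟨c / (γ - 1), div_pos hc (sub_pos.2 hγ), fun r hr ϱ hϱ => ?_⟩
  rw [relEntropy_eq_powBregman_div, div_mul_eq_mul_div]
  exact div_le_div_of_nonneg_right (hlow r hr ϱ hϱ) (sub_pos.2 hγ).le

theorem exists_relEntropy_le {γ : ℝ} (hγ : 1 < γ) (M : ℝ) :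
    ∃ C, ∀ r ∈ Ioc 0 M, ∀ ϱ, 0 ≤ ϱ → relEntropy γ ϱ r ≤ C * (1 + |ϱ - r| ^ γ) := by
  obtain ⟨C, hup⟩ := exists_powBregman_le hγ.le M
  refine ⟨C / (γ - 1), fun r hr ϱ hϱ => ?_⟩
  rw [relEntropy_eq_powBregman_div, div_mul_eq_mul_div]
  exact div_le_div_of_nonneg_right (hup r hr ϱ hϱ) (sub_pos.2 hγ).le

section Integral

variable {α : Type*} [MeasurableSpace α] {μ : Measure α} [IsFiniteMeasure μ]

theorem integral_rpow_le_of_lt_one {θ : ℝ} (hθ0 : 0 < θ) (hθ1 : θ < 1) {f : α → ℝ}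
    (hf0 : 0 ≤ᵐ[μ] f) (hf : Integrable f μ) :
    ∫ x, f x ^ θ ∂μ ≤ μ.real univ ^ (1 - θ) * (∫ x, f x ∂μ) ^ θ := by
  have hpow : (fun x => (f x ^ θ) ^ (1 / θ)) =ᵐ[μ] f := by
    filter_upwards [hf0] with x hx
    rw [← Real.rpow_mul hx, mul_one_div_cancel hθ0.ne', Real.rpow_one]
  have hmem : MemLp (fun x => f x ^ θ) (ENNReal.ofReal (1 / θ)) μ := by
    refine (integrable_norm_rpow_iff (hf.aemeasurable.pow_const θ).aestronglyMeasurable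
      (by simpa using hθ0) ENNReal.ofReal_ne_top).1 (hf.congr ?_)
    filter_upwards [hpow, hf0] with x hx hx0
    rw [ENNReal.toReal_ofReal (one_div_pos.2 hθ0).le, Real.norm_of_nonneg (Real.rpow_nonneg hx0 θ),
      hx]
  have h := integral_mul_le_Lp_mul_Lq_of_nonneg
    (Real.holderConjugate_one_div hθ0 (sub_pos.2 hθ1) (by ring))
    (hf0.mono fun x hx => Real.rpow_nonneg hx θ) (ae_of_all μ fun _ => zero_le_one) hmem
    (memLp_const 1)
  simp only [mul_one, Real.one_rpow, integral_const, smul_eq_mul, one_div_one_div] at h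
  rwa [integral_congr_ae hpow, mul_comm] at h

theorem integral_rpow_abs_le_entropyWeight {γ : ℝ} (hγ : 0 < γ) {d : α → ℝ} (hd : Measurable d)
    (hw : Integrable (fun x => entropyWeight γ (d x)) μ) :
    ∫ x, |d x| ^ γ ∂μ ≤ μ.real univ ^ (1 - γ / 2) * (∫ x, entropyWeight γ (d x) ∂μ) ^ (γ / 2)
      + ∫ x, entropyWeight γ (d x) ∂μ := by
  have habs : 0 ≤ᵐ[μ] fun x => |d x| ^ γ :=
    ae_of_all μ fun x => Real.rpow_nonneg (abs_nonneg (d x)) γ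
  have hW0 : 0 ≤ ∫ x, entropyWeight γ (d x) ∂μ := integral_nonneg fun x => entropyWeight_nonneg _
  rcases le_or_gt 2 γ with hγ2 | hγ2
  · calc ∫ x, |d x| ^ γ ∂μ ≤ ∫ x, entropyWeight γ (d x) ∂μ :=
          integral_mono_of_nonneg habs hw (ae_of_all μ fun x => rpow_abs_le_entropyWeight hγ2 _)
      _ ≤ _ := le_add_of_nonneg_left (mul_nonneg (by positivity) (by positivity))
  set g := fun x => min (d x ^ 2) 1
  have hg0 : 0 ≤ g := fun x => le_min (sq_nonneg _) zero_le_one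
  have hg : Integrable g μ := hw.mono' (by fun_prop) (ae_of_all μ fun x => by
    rw [Real.norm_of_nonneg (hg0 x)]; exact min_sq_one_le_entropyWeight hγ.le _)
  have hgγ : Integrable (fun x => g x ^ (γ / 2)) μ := by
    refine Integrable.of_bound
      ((hg.aemeasurable.pow_const _).aestronglyMeasurable) 1 (ae_of_all μ fun x => ?_)
    rw [Real.norm_of_nonneg (by positivity)]
    exact Real.rpow_le_one (hg0 x) (min_le_right _ _) (by positivity)
  calc ∫ x, |d x| ^ γ ∂μ ≤ ∫ x, (entropyWeight γ (d x) + g x ^ (γ / 2)) ∂μ :=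
        integral_mono_of_nonneg habs (hw.add hgγ)
          (ae_of_all μ fun x => rpow_abs_le_entropyWeight_add _)
    _ = ∫ x, entropyWeight γ (d x) ∂μ + ∫ x, g x ^ (γ / 2) ∂μ := integral_add hw hgγ
    _ ≤ ∫ x, entropyWeight γ (d x) ∂μ + μ.real univ ^ (1 - γ / 2) * (∫ x, g x ∂μ) ^ (γ / 2) := by
        gcongr
        exact integral_rpow_le_of_lt_one (by positivity) (by linarith) (ae_of_all μ hg0) hg
    _ ≤ _ := by
        rw [add_comm]
        have hgw : ∫ x, g x ∂μ ≤ ∫ x, entropyWeight γ (d x) ∂μ :=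
          integral_mono hg hw fun x => min_sq_one_le_entropyWeight hγ.le _
        have := integral_nonneg hg0 (μ := μ)
        gcongr

theorem integral_rpow_abs_le_of_entropyWeight_le {γ c C : ℝ} (hγ : 0 < γ) (hc : 0 < c)
    {d F : α → ℝ} (hd : Measurable d) (hF : AEStronglyMeasurable F μ)
    (hlow : ∀ x, c * entropyWeight γ (d x) ≤ F x) (hup : ∀ x, F x ≤ C * (1 + |d x| ^ γ)) :
    ∫ x, |d x| ^ γ ∂μ ≤ (μ.real univ ^ (1 - γ / 2) / c ^ (γ / 2) + 1 / c) * (∫ x, F x ∂μ) ^ (γ / 2)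
      + (μ.real univ ^ (1 - γ / 2) / c ^ (γ / 2) + 1 / c) * ∫ x, F x ∂μ := by
  have hF0 : ∀ x, 0 ≤ F x := fun x =>
    (mul_nonneg hc.le (entropyWeight_nonneg _)).trans (hlow x)
  have hI0 : 0 ≤ ∫ x, F x ∂μ := integral_nonneg hF0
  by_cases hint : Integrable (fun x => |d x| ^ γ) μ
  swap
  · rw [integral_undef hint]; positivity
  -- `hup` only makes `F` integrable; otherwise `∫ F` would be the junk value `0`.
  have hFint : Integrable F μ := (((integrable_const 1).add hint).const_mul C).mono' hF
    (ae_of_all μ fun x => by rw [Real.norm_of_nonneg (hF0 x)]; exact hup x)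
  have hw_le : ∀ x, entropyWeight γ (d x) ≤ F x / c := fun x => by
    rw [le_div_iff₀ hc, mul_comm]; exact hlow x
  have hw : Integrable (fun x => entropyWeight γ (d x)) μ := (hFint.div_const c).mono'
    (measurable_entropyWeight.comp hd).aestronglyMeasurable
    (ae_of_all μ fun x => by rw [Real.norm_of_nonneg (entropyWeight_nonneg _)]; exact hw_le x)
  have hwF : ∫ x, entropyWeight γ (d x) ∂μ ≤ (∫ x, F x ∂μ) / c := by
    rw [← integral_div]; exact integral_mono hw (hFint.div_const c) hw_le
  calc ∫ x, |d x| ^ γ ∂μ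
      ≤ μ.real univ ^ (1 - γ / 2) * ((∫ x, F x ∂μ) / c) ^ (γ / 2) + (∫ x, F x ∂μ) / c := by
        grw [integral_rpow_abs_le_entropyWeight hγ hd hw, hwF]
        exact integral_nonneg fun x => entropyWeight_nonneg _
    _ = (μ.real univ ^ (1 - γ / 2) / c ^ (γ / 2)) * (∫ x, F x ∂μ) ^ (γ / 2)
          + 1 / c * ∫ x, F x ∂μ := by
        rw [Real.div_rpow hI0 hc.le]; ring
    _ ≤ _ := by
        gcongr
        · exact le_add_of_nonneg_right (by positivity)
        · exact le_add_of_nonneg_left (by positivity)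

end Integral

lemma IsCompact.exists_subset_Icc_of_subset_Ioi {K : Set ℝ} (hK : IsCompact K)
    (hK' : K ⊆ Ioi 0) : ∃ m > 0, ∃ M, K ⊆ Icc m M := by
  rcases K.eq_empty_or_nonempty with rfl | hne
  · exact ⟨1, one_pos, 1, empty_subset _⟩
  exact ⟨sInf K, hK' (hK.sInf_mem hne), sSup K,
    fun x hx => ⟨csInf_le hK.bddBelow hx, le_csSup hK.bddAbove hx⟩⟩

theorem Lgamma_le_integral_relative_entropy_general (Ω : Set (EuclideanSpace ℝ (Fin 3)))
    (hΩb : Bornology.IsBounded Ω)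
    (γ : ℝ) (hγ : 1 < γ) (K : Set ℝ) (hK : IsCompact K) (hK' : K ⊆ Set.Ioi (0 : ℝ)) :
    ∃ c₅ > (0 : ℝ), ∀ ϱ r : EuclideanSpace ℝ (Fin 3) → ℝ,
      Measurable ϱ → Measurable r → (∀ x, 0 ≤ ϱ x) → (∀ x, r x ∈ K) →
      (∫ x in Ω, |ϱ x - r x| ^ γ)
        ≤ c₅ * ((∫ x in Ω, (ϱ x ^ γ / (γ - 1) - r x ^ γ / (γ - 1)
              - (γ * r x ^ (γ - 1) / (γ - 1)) * (ϱ x - r x))) ^ (γ / 2))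
          + c₅ * (∫ x in Ω, (ϱ x ^ γ / (γ - 1) - r x ^ γ / (γ - 1)
              - (γ * r x ^ (γ - 1) / (γ - 1)) * (ϱ x - r x))) := by
  obtain ⟨m, hm, M, hKmM⟩ := hK.exists_subset_Icc_of_subset_Ioi hK'
  obtain ⟨c, hc, hlow⟩ := exists_mul_entropyWeight_le_relEntropy hγ hm M
  obtain ⟨C, hup⟩ := exists_relEntropy_le hγ M
  have : IsFiniteMeasure (volume.restrict Ω) := isFiniteMeasure_restrict.2 hΩb.measure_lt_top.ne
  refine ⟨(volume.restrict Ω).real univ ^ (1 - γ / 2) / c ^ (γ / 2) + 1 / c, by positivity,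
    fun ϱ r hϱ hr hϱ0 hrK => ?_⟩
  exact integral_rpow_abs_le_of_entropyWeight_le (F := fun x => relEntropy γ (ϱ x) (r x))
    (by linarith) hc (hϱ.sub hr) (by unfold relEntropy; fun_prop)
    (fun x => hlow _ (hKmM (hrK x)) _ (hϱ0 x))
    (fun x => hup _ ⟨hK' (hrK x), (hKmM (hrK x)).2⟩ _ (hϱ0 x))

/-- On a bounded measurable `Ω ⊂ ℝ³`, for `r` valued in a compact `K ⊂ (0,∞)`,
`‖ϱ - r‖_{L^γ}^γ ≤ c₅ (∫_Ω H(ϱ|r))^{γ/2} + c₅ ∫_Ω H(ϱ|r)`. -/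
theorem Lgamma_le_integral_relative_entropy (Ω : Set (EuclideanSpace ℝ (Fin 3)))
    (hΩm : MeasurableSet Ω) (hΩb : Bornology.IsBounded Ω)
    (γ : ℝ) (hγ : 1 < γ) (K : Set ℝ) (hK : IsCompact K) (hK' : K ⊆ Set.Ioi (0 : ℝ)) :
    ∃ c₅ > (0 : ℝ), ∀ ϱ r : EuclideanSpace ℝ (Fin 3) → ℝ,
      Measurable ϱ → Measurable r → (∀ x, 0 ≤ ϱ x) → (∀ x, r x ∈ K) →
      (∫ x in Ω, |ϱ x - r x| ^ γ)
        ≤ c₅ * ((∫ x in Ω, (ϱ x ^ γ / (γ - 1) - r x ^ γ / (γ - 1)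
              - (γ * r x ^ (γ - 1) / (γ - 1)) * (ϱ x - r x))) ^ (γ / 2))
          + c₅ * (∫ x in Ω, (ϱ x ^ γ / (γ - 1) - r x ^ γ / (γ - 1)
              - (γ * r x ^ (γ - 1) / (γ - 1)) * (ϱ x - r x))) :=
  Lgamma_le_integral_relative_entropy_general Ω hΩb γ hγ K hK hK'
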